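/- Let N ≥ 1, λ > 0 and s ∈ ℝ^N, and set s†_i := s_i − λ(2i − N − 1) for each i, and c := (1/2)Σ_{i=1}^N ( 2λ(2i − N − 1)·s_i − (λ(2i − N − 1))² ). Then for every π ∈ ℝ^N with π_1 ≤ π_2 ≤ … ≤ π_N one has p_s(π) = (1/2)Σ_{i=1}^N (π_i − s†_i)² + c. -/
import Mathlib


noncomputable section

/-- The fused-lasso objective `p_s(π) = (1/2) Σ (π_i − s_i)² + λ Σ_{i<j} |π_i − π_j|`. -/
def pfun {N : ℕ} (lam : ℝ) (s π : Fin N → ℝ) : ℝ :=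
  (1 / 2) * ∑ i, (π i - s i) ^ 2 + lam * ∑ i, ∑ j, if i < j then |π i - π j| else 0

lemma key_sum {N : ℕ} (π : Fin N → ℝ) (hπ : Monotone π) :
    ∑ i : Fin N, ∑ j : Fin N, (if i < j then |π i - π j| else 0)
      = ∑ i : Fin N, ((2 * ((i : ℕ) + 1) : ℝ) - N - 1) * π i := by
  have h1 : ∀ i j : Fin N, (if i < j then |π i - π j| else 0)
      = (if i < j then π j else 0) - (if i < j then π i else 0) := by
    intro i j
    by_cases h : i < j
    · simp only [if_pos h]
      rw [abs_of_nonpos (by linarith [hπ h.le])]; ring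
    · simp [h]
  simp_rw [h1, Finset.sum_sub_distrib]
  have hlt : ∀ j : Fin N, Finset.filter (fun i => i < j) Finset.univ = Finset.Iio j := by
    intro j; ext i; simp
  have hgt : ∀ i : Fin N, Finset.filter (fun j => i < j) Finset.univ = Finset.Ioi i := by
    intro i; ext j; simp
  have hA : ∑ i : Fin N, ∑ j : Fin N, (if i < j then π j else 0)
      = ∑ j : Fin N, ((j : ℕ) : ℝ) * π j := by
    rw [Finset.sum_comm]
    refine Finset.sum_congr rfl fun j _ => ?_
    rw [Finset.sum_ite, Finset.sum_const, Finset.sum_const_zero, add_zero, hlt j,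
      Fin.card_Iio, nsmul_eq_mul]
  have hB : ∑ i : Fin N, ∑ j : Fin N, (if i < j then π i else 0)
      = ∑ i : Fin N, ((N - 1 - (i : ℕ) : ℕ) : ℝ) * π i := by
    refine Finset.sum_congr rfl fun i _ => ?_
    rw [Finset.sum_ite, Finset.sum_const, Finset.sum_const_zero, add_zero, hgt i,
      Fin.card_Ioi, nsmul_eq_mul]
  rw [hA, hB, ← Finset.sum_sub_distrib]
  refine Finset.sum_congr rfl fun i _ => ?_
  have hi : (i : ℕ) + 1 ≤ N := i.is_lt
  have : ((N - 1 - (i : ℕ) : ℕ) : ℝ) = (N : ℝ) - 1 - (i : ℕ) := by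
    have : N - 1 - (i : ℕ) = N - (1 + (i : ℕ)) := by omega
    rw [this]
    rw [Nat.cast_sub (by omega : 1 + (i : ℕ) ≤ N)]
    push_cast; ring
  rw [this]; ring

/-- with `s†_i = s_i − λ(2i − N − 1)` and
`c = (1/2) Σ_i (2λ(2i − N − 1) s_i − (λ(2i − N − 1))²)`, every nondecreasing `π`
satisfies `p_s(π) = (1/2) Σ_i (π_i − s†_i)² + c` (1-based indices). -/
theorem stmt_15 {N : ℕ} (hN : 1 ≤ N) (lam : ℝ) (hlam : 0 < lam) (s : Fin N → ℝ)
    (sdag : Fin N → ℝ)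
    (hsdag : ∀ i : Fin N, sdag i = s i - lam * ((2 * ((i : ℕ) + 1) : ℝ) - N - 1))
    (c : ℝ)
    (hc : c = (1 / 2) * ∑ i : Fin N,
      (2 * lam * ((2 * ((i : ℕ) + 1) : ℝ) - N - 1) * s i
        - (lam * ((2 * ((i : ℕ) + 1) : ℝ) - N - 1)) ^ 2))
    (π : Fin N → ℝ) (hπ : Monotone π) :
    pfun lam s π = (1 / 2) * ∑ i, (π i - sdag i) ^ 2 + c := by
  unfold pfun
  rw [key_sum π hπ, hc]
  simp_rw [hsdag]
  rw [Finset.mul_sum, Finset.mul_sum, Finset.mul_sum, ← Finset.sum_add_distrib,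
    Finset.mul_sum, ← Finset.sum_add_distrib]
  refine Finset.sum_congr rfl fun i _ => ?_
  ring
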